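/- Let f : ℝ → ℝ be nonnegative, lower semicontinuous, and Lebesgue integrable, and suppose there exists x* ∈ ℝ such that f is nondecreasing on (−∞, x*] and nonincreasing on [x*, ∞). Then for every integer k ≥ 1, ∫_ℝ f(x)·|err(x)|^k dx ≤ (δ^k/(k+1)) · ∫_ℝ f(x) dx + (4/(k+1)) · f(x*) · δ^{k+1}. -/

import Mathlib

/-!
The absolute rounding error `|rd x - x|` is the distance `d x` from `x` to `F`. On a gap `[p, q]`
of `F` the function `d` is the tent `min (x - p) (q - x)`, so `(k + 1) ∫ d ^ k` over the gap is
`(q - p) ((q - p) / 2) ^ k ≤ δ ^ k (q - p)`. A real induction over the closed set `F` extends this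
bound to every interval with endpoints in `F`, and enlarging an arbitrary interval to bracketing
points of `F` costs at most `4 δ ^ (k + 1)`. Since `f` is unimodal, each superlevel set `{f > t}`
is an interval, so its measure for the density `d ^ k` is at most `δ ^ k / (k + 1)` times its
length plus `4 δ ^ (k + 1) / (k + 1)`; the layer-cake formula over `0 < t < f x*` concludes.
-/

open MeasureTheory

/-- Greatest element of `F` below `x`. -/
noncomputable def flF (F : Set ℝ) (x : ℝ) : ℝ := sSup (F ∩ Set.Iic x)

/-- Least element of `F` above `x`. -/
noncomputable def ceF (F : Set ℝ) (x : ℝ) : ℝ := sInf (F ∩ Set.Ici x)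

open Set Metric

section NearestPoints

variable {F : Set ℝ}

theorem flF_le (hF_below : ∀ x : ℝ, ∃ z ∈ F, z ≤ x) (x : ℝ) : flF F x ≤ x :=
  let ⟨z, hz, hzx⟩ := hF_below x
  csSup_le ⟨z, hz, hzx⟩ fun _ hy => hy.2

theorem le_ceF (hF_above : ∀ x : ℝ, ∃ z ∈ F, x ≤ z) (x : ℝ) : x ≤ ceF F x :=
  let ⟨z, hz, hxz⟩ := hF_above x
  le_csInf ⟨z, hz, hxz⟩ fun _ hy => hy.2

theorem le_flF {z x : ℝ} (hz : z ∈ F) (hzx : z ≤ x) : z ≤ flF F x :=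
  le_csSup ⟨x, fun _ hy => hy.2⟩ ⟨hz, hzx⟩

theorem ceF_le {z x : ℝ} (hz : z ∈ F) (hxz : x ≤ z) : ceF F x ≤ z :=
  csInf_le ⟨x, fun _ hy => hy.2⟩ ⟨hz, hxz⟩

theorem flF_mem (hF : IsClosed F) (hF_below : ∀ x : ℝ, ∃ z ∈ F, z ≤ x) (x : ℝ) :
    flF F x ∈ F :=
  let ⟨z, hz, hzx⟩ := hF_below x
  ((hF.inter isClosed_Iic).csSup_mem ⟨z, hz, hzx⟩ ⟨x, fun _ hy => hy.2⟩).1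

theorem ceF_mem (hF : IsClosed F) (hF_above : ∀ x : ℝ, ∃ z ∈ F, x ≤ z) (x : ℝ) :
    ceF F x ∈ F :=
  let ⟨z, hz, hxz⟩ := hF_above x
  ((hF.inter isClosed_Ici).csInf_mem ⟨z, hz, hxz⟩ ⟨x, fun _ hy => hy.2⟩).1

theorem infDist_le_sub_of_mem {p x : ℝ} (hp : p ∈ F) (hpx : p ≤ x) : infDist x F ≤ x - p := by
  simpa [Real.dist_eq, abs_of_nonneg (sub_nonneg.2 hpx)] using infDist_le_dist_of_mem (x := x) hp

theorem infDist_le_sub_of_mem' {q x : ℝ} (hq : q ∈ F) (hxq : x ≤ q) : infDist x F ≤ q - x := by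
  simpa [Real.dist_eq, abs_of_nonpos (sub_nonpos.2 hxq)] using infDist_le_dist_of_mem (x := x) hq

theorem min_sub_flF_ceF_sub_eq_infDist (hF : IsClosed F) (hF_below : ∀ x : ℝ, ∃ z ∈ F, z ≤ x)
    (hF_above : ∀ x : ℝ, ∃ z ∈ F, x ≤ z) (x : ℝ) :
    min (x - flF F x) (ceF F x - x) = infDist x F := by
  have hfl := flF_le hF_below x
  have hce := le_ceF hF_above x
  refine le_antisymm ((le_infDist ⟨_, flF_mem hF hF_below x⟩).2 fun z hz => ?_) (le_min ?_ ?_)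
  · rw [Real.dist_eq]
    rcases le_total z x with hzx | hxz
    · have := le_flF hz hzx
      exact (min_le_left _ _).trans (by rw [abs_of_nonneg (by linarith)]; linarith)
    · have := ceF_le hz hxz
      exact (min_le_right _ _).trans (by rw [abs_of_nonpos (by linarith)]; linarith)
  · exact infDist_le_sub_of_mem (flF_mem hF hF_below x) hfl
  · exact infDist_le_sub_of_mem' (ceF_mem hF hF_above x) hce

end NearestPoints

theorem IsClosed.antitoneOn_of_exists_gt {α β : Type*} [ConditionallyCompleteLinearOrder α]
    [TopologicalSpace α] [OrderTopology α] [LinearOrder β] [TopologicalSpace β]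
    [OrderClosedTopology β] {F : Set α} (hF : IsClosed F) {Ψ : α → β} (hΨ : ContinuousOn Ψ F)
    (hstep : ∀ c ∈ F, ∀ b ∈ F, c < b → ∃ q ∈ F, c < q ∧ q ≤ b ∧ Ψ q ≤ Ψ c) :
    AntitoneOn Ψ F := by
  intro a ha b hb hab
  set S := (F ∩ Icc a b) ∩ Ψ ⁻¹' Iic (Ψ a)
  have hS : IsClosed S :=
    (hΨ.mono inter_subset_left).preimage_isClosed_of_isClosed (hF.inter isClosed_Icc) isClosed_Iic
  have haS : a ∈ S := ⟨⟨ha, left_mem_Icc.2 hab⟩, le_rfl⟩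
  have hbdd : BddAbove S := ⟨b, fun _ hy => hy.1.2.2⟩
  obtain ⟨⟨hcF, -, hcb⟩, hc⟩ := hS.csSup_mem ⟨a, haS⟩ hbdd
  rcases hcb.lt_or_eq with hcb | hcb
  · obtain ⟨q, hqF, hcq, hqb, hq⟩ := hstep _ hcF b hb hcb
    have hqS : q ∈ S := ⟨⟨hqF, (le_csSup hbdd haS).trans hcq.le, hqb⟩, hq.trans hc⟩
    exact absurd (le_csSup hbdd hqS) hcq.not_ge
  · rwa [hcb] at hc

theorem integral_min_sub_pow {p q : ℝ} (hpq : p ≤ q) (k : ℕ) :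
    ∫ x in p..q, min (x - p) (q - x) ^ k = (q - p) * ((q - p) / 2) ^ k / (k + 1) := by
  set m := (p + q) / 2 with hm
  have hcont : Continuous fun x : ℝ => min (x - p) (q - x) ^ k := by fun_prop
  have hleft : ∫ x in p..m, min (x - p) (q - x) ^ k = ∫ x in p..m, (x - p) ^ k :=
    intervalIntegral.integral_congr fun x hx => by
      rw [uIcc_of_le (by linarith [hm])] at hx
      rw [min_eq_left (by linarith [hx.2, hm])]
  have hright : ∫ x in m..q, min (x - p) (q - x) ^ k = ∫ x in m..q, (q - x) ^ k :=
    intervalIntegral.integral_congr fun x hx => by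
      rw [uIcc_of_le (by linarith [hm])] at hx
      rw [min_eq_right (by linarith [hx.1, hm])]
  rw [← intervalIntegral.integral_add_adjacent_intervals (b := m) (hcont.intervalIntegrable _ _)
    (hcont.intervalIntegrable _ _), hleft, hright,
    intervalIntegral.integral_comp_sub_right (fun x => x ^ k),
    intervalIntegral.integral_comp_sub_left (fun x => x ^ k), integral_pow, integral_pow]
  ring

theorem mul_integral_infDist_pow_le_mul_half_pow {F : Set ℝ} {p q : ℝ} (hp : p ∈ F) (hq : q ∈ F)
    (hpq : p ≤ q) (k : ℕ) :
    (k + 1) * ∫ x in p..q, infDist x F ^ k ≤ (q - p) * ((q - p) / 2) ^ k := by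
  have hmono : ∫ x in p..q, infDist x F ^ k ≤ ∫ x in p..q, min (x - p) (q - x) ^ k := by
    refine intervalIntegral.integral_mono_on hpq
      (((continuous_infDist_pt F).pow k).intervalIntegrable _ _)
      ((by fun_prop : Continuous fun x : ℝ => min (x - p) (q - x) ^ k).intervalIntegrable _ _)
      fun x hx => pow_le_pow_left₀ infDist_nonneg
        (le_min (infDist_le_sub_of_mem hp hx.1) (infDist_le_sub_of_mem' hq hx.2)) k
  rw [integral_min_sub_pow hpq] at hmono
  have hk : (0 : ℝ) < k + 1 := by positivity
  calc (k + 1) * ∫ x in p..q, infDist x F ^ k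
      ≤ (k + 1) * ((q - p) * ((q - p) / 2) ^ k / (k + 1)) := by gcongr
    _ = (q - p) * ((q - p) / 2) ^ k := by field_simp

def GapsLE (F : Set ℝ) (ε : ℝ) : Prop :=
  ∀ x, ∃ p ∈ F, ∃ q ∈ F, p ≤ x ∧ x ≤ q ∧ q - p ≤ ε

namespace GapsLE

variable {F : Set ℝ} {ε δ : ℝ}

theorem exists_mem_Ioc_sub_le (hF : GapsLE F ε) (hε : 0 < ε) {b c : ℝ} (hb : b ∈ F)
    (hcb : c < b) : ∃ q ∈ F, c < q ∧ q ≤ b ∧ q - c ≤ ε := by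
  obtain ⟨p, hp, q, hq, hpx, hxq, hpq⟩ := hF (min b (c + ε))
  have hxb := min_le_left b (c + ε)
  have hxc := min_le_right b (c + ε)
  have hcx : c < min b (c + ε) := lt_min hcb (by linarith)
  by_cases hcp : c < p
  · exact ⟨p, hp, hcp, by linarith, by linarith⟩
  · refine ⟨min q b, ?_, lt_min (by linarith) hcb, min_le_right _ _, by linarith [min_le_left q b]⟩
    rcases min_choice q b with h | h <;> rw [h] <;> assumption

theorem mul_integral_infDist_pow_le_of_mem (hF : GapsLE F (2 * δ)) (hF_closed : IsClosed F)
    (hδ : 0 < δ) (k : ℕ) {a b : ℝ} (ha : a ∈ F) (hb : b ∈ F) (hab : a ≤ b) :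
    (k + 1) * ∫ x in a..b, infDist x F ^ k ≤ δ ^ k * (b - a) := by
  have hint : ∀ p q : ℝ, IntervalIntegrable (fun x => infDist x F ^ k) volume p q :=
    fun _ _ => ((continuous_infDist_pt F).pow k).intervalIntegrable _ _
  set Ψ : ℝ → ℝ := fun y => (k + 1) * (∫ x in 0..y, infDist x F ^ k) - δ ^ k * y
  have hΨ : Continuous Ψ := by
    have := intervalIntegral.continuous_primitive hint 0
    fun_prop
  have hΨ_sub : ∀ p q, Ψ q - Ψ p = (k + 1) * (∫ x in p..q, infDist x F ^ k) - δ ^ k * (q - p) :=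
    fun p q => by
      rw [← intervalIntegral.integral_interval_sub_left (hint 0 q) (hint 0 p)]
      ring
  have hanti : AntitoneOn Ψ F := hF_closed.antitoneOn_of_exists_gt hΨ.continuousOn
    fun c hc b hb hcb => by
      obtain ⟨q, hq, hcq, hqb, hqc⟩ := hF.exists_mem_Ioc_sub_le (by positivity) hb hcb
      refine ⟨q, hq, hcq, hqb, sub_nonpos.1 ?_⟩
      have hgap := mul_integral_infDist_pow_le_mul_half_pow (k := k) hc hq hcq.le
      have hpow : ((q - c) / 2) ^ k ≤ δ ^ k := pow_le_pow_left₀ (by linarith) (by linarith) k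
      rw [hΨ_sub]
      nlinarith
  have := sub_nonpos.2 (hanti ha hb hab)
  rw [hΨ_sub] at this
  linarith

theorem mul_integral_infDist_pow_le (hF : GapsLE F (2 * δ)) (hF_closed : IsClosed F)
    (hδ : 0 < δ) (k : ℕ) {α β : ℝ} (hαβ : α ≤ β) :
    (k + 1) * ∫ x in α..β, infDist x F ^ k ≤ δ ^ k * (β - α) + 4 * δ ^ (k + 1) := by
  obtain ⟨p, hp, q', -, hpα, hαq', hpq'⟩ := hF α
  obtain ⟨p', -, q, hq, hp'β, hβq, hp'q⟩ := hF β
  have hsub : ∫ x in α..β, infDist x F ^ k ≤ ∫ x in p..q, infDist x F ^ k :=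
    intervalIntegral.integral_mono_interval hpα hαβ hβq
      (ae_of_all _ fun _ => pow_nonneg infDist_nonneg k)
      (((continuous_infDist_pt F).pow k).intervalIntegrable _ _)
  have hpq := hF.mul_integral_infDist_pow_le_of_mem hF_closed hδ k hp hq (by linarith)
  have hδk : 0 ≤ δ ^ k := by positivity
  calc (k + 1) * ∫ x in α..β, infDist x F ^ k ≤ δ ^ k * (q - p) := by nlinarith
    _ ≤ δ ^ k * (β - α + 4 * δ) := by gcongr; linarith
    _ = δ ^ k * (β - α) + 4 * δ ^ (k + 1) := by ring

theorem withDensity_infDist_pow_Icc_le (hF : GapsLE F (2 * δ)) (hF_closed : IsClosed F)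
    (hδ : 0 < δ) (k : ℕ) {α β : ℝ} (hαβ : α ≤ β) :
    volume.withDensity (fun x => ENNReal.ofReal (infDist x F ^ k)) (Icc α β)
      ≤ ENNReal.ofReal (δ ^ k / (k + 1)) * volume (Icc α β)
        + ENNReal.ofReal (4 / (k + 1) * δ ^ (k + 1)) := by
  have hint : IntegrableOn (fun x => infDist x F ^ k) (Icc α β) :=
    ((continuous_infDist_pt F).pow k).integrableOn_Icc
  rw [withDensity_apply _ measurableSet_Icc, ← ofReal_integral_eq_lintegral_ofReal hint
    (ae_of_all _ fun _ => pow_nonneg infDist_nonneg k), integral_Icc_eq_integral_Ioc,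
    ← intervalIntegral.integral_of_le hαβ, Real.volume_Icc,
    ← ENNReal.ofReal_mul (by positivity), ← ENNReal.ofReal_add (by positivity) (by positivity)]
  refine ENNReal.ofReal_le_ofReal ?_
  have h := hF.mul_integral_infDist_pow_le hF_closed hδ k hαβ
  have hk : (0 : ℝ) < k + 1 := by positivity
  rw [div_mul_eq_mul_div, div_mul_eq_mul_div, ← add_div, le_div_iff₀ hk]
  linarith

end GapsLE

theorem measure_le_of_ordConnected {ν : Measure ℝ} {C₁ C₂ : ENNReal}
    (h : ∀ α β, α ≤ β → ν (Icc α β) ≤ C₁ * volume (Icc α β) + C₂) {S : Set ℝ}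
    (hS : S.OrdConnected) : ν S ≤ C₁ * volume S + C₂ := by
  have hbdd : ∀ T ⊆ S, T.OrdConnected → BddBelow T → BddAbove T → ν T ≤ C₁ * volume S + C₂ := by
    intro T hTS hT hb ha
    rcases T.eq_empty_or_nonempty with rfl | hne
    · simp
    calc ν T ≤ ν (Icc (sInf T) (sSup T)) := measure_mono (subset_Icc_csInf_csSup hb ha)
      _ ≤ C₁ * volume (Icc (sInf T) (sSup T)) + C₂ := h _ _ (csInf_le_csSup hne hb ha)
      _ = C₁ * volume (Ioo (sInf T) (sSup T)) + C₂ := by rw [Real.volume_Icc, Real.volume_Ioo]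
      _ ≤ C₁ * volume S + C₂ := by
        gcongr
        exact (IsConnected.Ioo_csInf_csSup_subset ⟨hne, hT.isPreconnected⟩ hb ha).trans hTS
  have hunion : ⋃ n : ℕ, S ∩ Icc (-n : ℝ) n = S := by
    refine (iUnion_subset fun _ => inter_subset_left).antisymm fun x hx => ?_
    obtain ⟨n, hn⟩ := exists_nat_ge |x|
    exact mem_iUnion.2 ⟨n, hx, neg_le_of_abs_le hn, le_of_abs_le hn⟩
  have hmono : Monotone fun n : ℕ => S ∩ Icc (-n : ℝ) n := fun m n hmn =>
    inter_subset_inter_right _ (Icc_subset_Icc (by simpa using hmn) (by simpa using hmn))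
  calc ν S = ⨆ n : ℕ, ν (S ∩ Icc (-n : ℝ) n) := by rw [← hmono.measure_iUnion, hunion]
    _ ≤ C₁ * volume S + C₂ := iSup_le fun n => hbdd _ inter_subset_left
      (hS.inter ordConnected_Icc) (bddBelow_Icc.mono inter_subset_right)
      (bddAbove_Icc.mono inter_subset_right)

section Unimodal

variable {f : ℝ → ℝ} {c : ℝ}

theorem apply_le_of_monotoneOn_antitoneOn (hmono : MonotoneOn f (Iic c))
    (hanti : AntitoneOn f (Ici c)) (x : ℝ) : f x ≤ f c := by
  rcases le_total x c with h | h
  · exact hmono h self_mem_Iic h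
  · exact hanti self_mem_Ici h h

theorem ordConnected_setOf_lt_of_monotoneOn_antitoneOn (hmono : MonotoneOn f (Iic c))
    (hanti : AntitoneOn f (Ici c)) (t : ℝ) : {x | t < f x}.OrdConnected := by
  refine ⟨fun u hu v hv z hz => ?_⟩
  rcases le_total z c with hzc | hcz
  · exact hu.trans_le (hmono (hz.1.trans hzc) hzc hz.1)
  · exact hv.trans_le (hanti hcz (hcz.trans hz.2) hz.2)

end Unimodal

section LayerCake

variable {α : Type*} [MeasurableSpace α] {μ ν : Measure α} {f : α → ℝ} {M : ℝ}

theorem lintegral_ofReal_le_of_measure_lt_le {C₁ C₂ : ENNReal} (hf0 : ∀ x, 0 ≤ f x)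
    (hfM : ∀ x, f x ≤ M) (hfμ : AEMeasurable f μ) (hfν : AEMeasurable f ν)
    (h : ∀ t, 0 < t → t < M → ν {x | t < f x} ≤ C₁ * μ {x | t < f x} + C₂) :
    ∫⁻ x, ENNReal.ofReal (f x) ∂ν
      ≤ C₁ * ∫⁻ x, ENNReal.ofReal (f x) ∂μ + C₂ * ENNReal.ofReal M := by
  have hpt : ∀ t ∈ Ioi (0 : ℝ),
      ν {x | t < f x} ≤ C₁ * μ {x | t < f x} + (Iio M).indicator (fun _ => C₂) t := by
    intro t ht
    by_cases htM : t < M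
    · simpa [htM] using h t ht htM
    · have : {x | t < f x} = ∅ := eq_empty_of_forall_notMem fun x hx => htM (hx.trans_le (hfM x))
      simp [this]
  have hmeas : Measurable fun t : ℝ => μ {x | t < f x} :=
    Antitone.measurable fun s t hst => measure_mono fun x hx => hst.trans_lt hx
  rw [lintegral_eq_lintegral_meas_lt ν (ae_of_all _ hf0) hfν,
    lintegral_eq_lintegral_meas_lt μ (ae_of_all _ hf0) hfμ, ← lintegral_const_mul _ hmeas]
  calc ∫⁻ t in Ioi 0, ν {x | t < f x}
      ≤ ∫⁻ t in Ioi 0, C₁ * μ {x | t < f x} + (Iio M).indicator (fun _ => C₂) t :=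
        setLIntegral_mono' measurableSet_Ioi hpt
    _ = _ := by
      rw [lintegral_add_right _ (measurable_const.indicator measurableSet_Iio),
        lintegral_indicator_const measurableSet_Iio, Measure.restrict_apply measurableSet_Iio,
        Iio_inter_Ioi, Real.volume_Ioo, sub_zero]

theorem integral_le_of_measure_lt_le {a b : ℝ} (hf0 : ∀ x, 0 ≤ f x) (hfM : ∀ x, f x ≤ M)
    (hM : 0 ≤ M) (hfμ : Integrable f μ) (hfν : AEMeasurable f ν) (ha : 0 ≤ a) (hb : 0 ≤ b)
    (h : ∀ t, 0 < t → t < M →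
      ν {x | t < f x} ≤ ENNReal.ofReal a * μ {x | t < f x} + ENNReal.ofReal b) :
    ∫ x, f x ∂ν ≤ a * ∫ x, f x ∂μ + b * M := by
  have hint := integral_nonneg (μ := μ) (f := f) hf0
  rw [integral_eq_lintegral_of_nonneg_ae (ae_of_all _ hf0) hfν.aestronglyMeasurable]
  refine ENNReal.toReal_le_of_le_ofReal (by positivity) ?_
  rw [ENNReal.ofReal_add (by positivity) (by positivity), ENNReal.ofReal_mul ha,
    ENNReal.ofReal_mul hb, ofReal_integral_eq_lintegral_ofReal hfμ (ae_of_all _ hf0)]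
  exact lintegral_ofReal_le_of_measure_lt_le hf0 hfM hfμ.aemeasurable hfν h

end LayerCake

theorem unimodal_error_int_abs_general
    (F : Set ℝ) (hF_closed : IsClosed F)
    (hF_below : ∀ x : ℝ, ∃ z ∈ F, z ≤ x) (hF_above : ∀ x : ℝ, ∃ z ∈ F, x ≤ z)
    (rd : ℝ → ℝ)
    (hrd_near : ∀ x : ℝ, |rd x - x| = min (x - flF F x) (ceF F x - x))
    (δ : ℝ) (hδ : 0 < δ) (hgap : ∀ x : ℝ, ceF F x - flF F x ≤ 2 * δ)
    (f : ℝ → ℝ) (hf_nonneg : ∀ x, 0 ≤ f x)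
    (hf_int : Integrable f)
    (xstar : ℝ) (hf_mono : MonotoneOn f (Set.Iic xstar))
    (hf_anti : AntitoneOn f (Set.Ici xstar))
    (k : ℕ) :
    (∫ x, f x * |rd x - x| ^ k)
      ≤ (δ ^ k / (k + 1)) * (∫ x, f x) + (4 / (k + 1)) * f xstar * δ ^ (k + 1) := by
  have hgaps : GapsLE F (2 * δ) := fun x => ⟨_, flF_mem hF_closed hF_below x,
    _, ceF_mem hF_closed hF_above x, flF_le hF_below x, le_ceF hF_above x, hgap x⟩
  have herr : ∀ x, |rd x - x| = infDist x F := fun x =>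
    (hrd_near x).trans (min_sub_flF_ceF_sub_eq_infDist hF_closed hF_below hF_above x)
  have hlayer := integral_le_of_measure_lt_le (μ := volume)
    (ν := volume.withDensity fun x => ENNReal.ofReal (infDist x F ^ k))
    (a := δ ^ k / (k + 1)) (b := 4 / (k + 1) * δ ^ (k + 1)) hf_nonneg
    (apply_le_of_monotoneOn_antitoneOn hf_mono hf_anti) (hf_nonneg xstar) hf_int
    (hf_int.aemeasurable.mono_ac (withDensity_absolutelyContinuous _ _))
    (by positivity) (by positivity) fun t _ _ =>
      measure_le_of_ordConnected (fun _ _ => hgaps.withDensity_infDist_pow_Icc_le hF_closed hδ k)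
        (ordConnected_setOf_lt_of_monotoneOn_antitoneOn hf_mono hf_anti t)
  rw [integral_withDensity_eq_integral_toReal_smul (by fun_prop)
    (ae_of_all _ fun _ => ENNReal.ofReal_lt_top)] at hlayer
  simp_rw [herr, mul_comm (f _)]
  simpa [ENNReal.toReal_ofReal (pow_nonneg infDist_nonneg k), mul_right_comm] using hlayer

theorem unimodal_error_int_abs
    (F : Set ℝ) (hF_closed : IsClosed F) (hF_ne : F.Nonempty)
    (hF_below : ∀ x : ℝ, ∃ z ∈ F, z ≤ x) (hF_above : ∀ x : ℝ, ∃ z ∈ F, x ≤ z)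
    (rd : ℝ → ℝ) (hrd_meas : Measurable rd)
    (hrd_mem : ∀ x : ℝ, rd x = flF F x ∨ rd x = ceF F x)
    (hrd_near : ∀ x : ℝ, |rd x - x| = min (x - flF F x) (ceF F x - x))
    (δ : ℝ) (hδ : 0 < δ) (hgap : ∀ x : ℝ, ceF F x - flF F x ≤ 2 * δ)
    (f : ℝ → ℝ) (hf_nonneg : ∀ x, 0 ≤ f x) (hf_lsc : LowerSemicontinuous f)
    (hf_int : Integrable f)
    (xstar : ℝ) (hf_mono : MonotoneOn f (Set.Iic xstar))
    (hf_anti : AntitoneOn f (Set.Ici xstar))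
    (k : ℕ) (hk : 1 ≤ k) :
    (∫ x, f x * |rd x - x| ^ k)
      ≤ (δ ^ k / (k + 1)) * (∫ x, f x) + (4 / (k + 1)) * f xstar * δ ^ (k + 1) :=
  unimodal_error_int_abs_general F hF_closed hF_below hF_above rd hrd_near δ hδ hgap f hf_nonneg
    hf_int xstar hf_mono hf_anti k
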